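/- arXiv:2310.02627 — 5 statements merged into one kernel-verified Lean document; each statement's English description precedes it below -/
import Mathlib

section
/- Let p be an odd prime and G a finite p-group whose derived subgroup G' is cyclic. Then every conjugacy class C of G is a coset Hg for some subgroup H of G' and some g in C. -/
/-!
Write the class of `g` as `K * {g}` with `K = {⁅u, g⁆ | u ∈ G}`, so that `K ⊆ G'` and
`|K| = |G : C_G(g)| = p ^ k`. It suffices to show `⁅u, g⁆ ^ p ^ k = 1` for every `u`: in the
cyclic group `G'` the subgroup generated by `K` then has exponent, hence order, at most `p ^ k`,
so it is `K` itself.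

Put `y = ⁅u, g⁆`. Conjugation by `u` acts on the cyclic normal subgroup `G'` as a power map
`z ↦ z ^ a`, and unless `y = 1` we have `a ≡ 1 [ZMOD p]` because `u` has `p`-power order. Hence
`u ^ t * g * u⁻¹ ^ t = y ^ (1 + a + ⋯ + a ^ (t - 1)) * g`. Since `u ^ p ^ k` centralises `g`,
`y` is killed by `∑ i < p ^ k, a ^ i`, which for odd `p` is `p ^ k` times a unit; as the order
of `y` is a power of `p`, this forces `y ^ p ^ k = 1`.
-/

open Finset Subgroup Pointwise
open scoped commutatorElement

theorem geom_sum_range_mul {R : Type*} [CommSemiring R] (a : R) (m n : ℕ) :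
    ∑ i ∈ range (m * n), a ^ i = (∑ i ∈ range m, a ^ i) * ∑ j ∈ range n, (a ^ m) ^ j := by
  induction n with
  | zero => simp
  | succ n ih =>
    rw [Nat.mul_succ, sum_range_add, ih, sum_range_succ, mul_add, ← pow_mul,
      sum_mul _ _ (a ^ (m * n))]
    simp only [pow_add, mul_comm]

theorem Int.geom_sum_range_prime_modEq {p : ℕ} (hodd : Odd p) {a : ℤ} (ha : a ≡ 1 [ZMOD p]) :
    ∑ i ∈ Finset.range p, a ^ i ≡ p [ZMOD p ^ 2] := by
  obtain ⟨b, hb⟩ := (Int.modEq_iff_dvd.mp ha.symm)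
  have := odd_sq_dvd_geom_sum₂_sub 1 b hodd
  simp only [one_pow, mul_one, ← hb, add_sub_cancel] at this
  exact (Int.modEq_iff_dvd.mpr this).symm

theorem Int.geom_sum_range_prime_pow_modEq {p : ℕ} (hodd : Odd p) {a : ℤ} (ha : a ≡ 1 [ZMOD p])
    (k : ℕ) : ∑ i ∈ Finset.range (p ^ k), a ^ i ≡ p ^ k [ZMOD p ^ (k + 1)] := by
  induction k with
  | zero => simp
  | succ k ih =>
    have hT := Int.geom_sum_range_prime_modEq hodd (by simpa using ha.pow (p ^ k))
    obtain ⟨s, hs⟩ := (Int.modEq_iff_dvd.mp ih.symm)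
    obtain ⟨t, ht⟩ := (Int.modEq_iff_dvd.mp hT.symm)
    rw [show p ^ (k + 1) = p ^ k * p from pow_succ p k, geom_sum_range_mul]
    refine (Int.modEq_iff_dvd.mpr ⟨s + t + s * t * p, ?_⟩).symm
    linear_combination
      (∑ i ∈ Finset.range p, (a ^ p ^ k) ^ i) * hs + (p ^ k + p ^ (k + 1) * s) * ht

section

variable {G : Type*} [Group G]

theorem conj_pow_eq_zpow_pow {u y : G} {a : ℤ} (hy : u * y * u⁻¹ = y ^ a) (t : ℕ) :
    u ^ t * y * (u ^ t)⁻¹ = y ^ (a ^ t) := by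
  induction t with
  | zero => simp
  | succ t ih =>
    calc u ^ (t + 1) * y * (u ^ (t + 1))⁻¹ = u * (u ^ t * y * (u ^ t)⁻¹) * u⁻¹ := by group
      _ = y ^ (a ^ (t + 1)) := by rw [ih, ← conj_zpow, hy, ← zpow_mul, pow_succ']

theorem conj_pow_eq_zpow_geom_sum_mul {u g y : G} {a : ℤ} (hg : u * g * u⁻¹ = y * g)
    (hy : u * y * u⁻¹ = y ^ a) (t : ℕ) :
    u ^ t * g * (u ^ t)⁻¹ = y ^ (∑ i ∈ range t, a ^ i) * g := by
  induction t with
  | zero => simp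
  | succ t ih =>
    calc u ^ (t + 1) * g * (u ^ (t + 1))⁻¹ = u * (u ^ t * g * (u ^ t)⁻¹) * u⁻¹ := by group
      _ = (u * y * u⁻¹) ^ (∑ i ∈ range t, a ^ i) * (u * g * u⁻¹) := by
        rw [ih, conj_zpow]; group
      _ = y ^ (∑ i ∈ range (t + 1), a ^ i) * g := by
        rw [hg, hy, ← zpow_mul, ← mul_assoc, ← zpow_add_one, geom_sum_succ]

theorem exists_conj_eq_zpow_of_isCyclic (N : Subgroup G) [N.Normal] [IsCyclic N] (u : G) :
    ∃ a : ℤ, ∀ z ∈ N, u * z * u⁻¹ = z ^ a := by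
  obtain ⟨a, ha⟩ := MonoidHom.map_cyclic (MulAut.conjNormal (H := N) u).toMonoidHom
  exact ⟨a, fun z hz => by simpa using congrArg Subtype.val (ha ⟨z, hz⟩)⟩

theorem IsPGroup.intModEq_one_of_conj_eq_zpow {p : ℕ} [Fact p.Prime] (hG : IsPGroup p G)
    {u y : G} {a : ℤ} (hy1 : y ≠ 1) (hy : u * y * u⁻¹ = y ^ a) : a ≡ 1 [ZMOD p] := by
  obtain ⟨r, hr⟩ := hG u
  obtain ⟨e, he⟩ := IsPGroup.iff_orderOf.mp hG y
  have hfix : y ^ (a ^ p ^ r - 1) = 1 := by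
    rw [zpow_sub_one, ← conj_pow_eq_zpow_pow hy, hr]; group
  have he0 : e ≠ 0 := by
    rintro rfl; exact hy1 (orderOf_eq_one_iff.mp (by simpa using he))
  have hdvd : (p : ℤ) ∣ a ^ p ^ r - 1 := (dvd_pow_self (p : ℤ) he0).trans
    (by exact_mod_cast he ▸ orderOf_dvd_iff_zpow_eq_one.mpr hfix)
  have hzmod : ((a ^ p ^ r - 1 : ℤ) : ZMod p) = 0 :=
    (ZMod.intCast_zmod_eq_zero_iff_dvd _ _).mpr hdvd
  push_cast [ZMod.pow_card_pow] at hzmod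
  exact (ZMod.intCast_eq_intCast_iff _ _ _).mp (by push_cast; exact sub_eq_zero.mp hzmod)

theorem IsPGroup.pow_index_mem {p : ℕ} [Fact p.Prime] (hG : IsPGroup p G) (H : Subgroup G)
    [H.FiniteIndex] (x : G) : x ^ H.index ∈ H := by
  -- `H ⊓ ⟨x⟩` is normal in the abelian group `⟨x⟩`, of `p`-power index at most `H.index`.
  set Z := zpowers x
  obtain ⟨i, hi⟩ := (hG.to_subgroup Z).index (H.subgroupOf Z)
  obtain ⟨j, hj⟩ := hG.index H
  have hle : H.relIndex Z ≤ H.index := by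
    simpa using relIndex_le_of_le_right le_top (by simpa using FiniteIndex.index_ne_zero)
  obtain ⟨t, ht⟩ : H.relIndex Z ∣ H.index := by
    rw [relIndex, hi, hj] at hle ⊢
    exact Nat.pow_dvd_pow p ((Nat.pow_le_pow_iff_right (Fact.out : p.Prime).one_lt).mp hle)
  have : (H.subgroupOf Z).Normal := normal_of_isMulCommutative _
  have hmem := (H.subgroupOf Z).pow_index_mem ⟨x, mem_zpowers x⟩
  rw [ht, pow_mul]
  exact H.pow_mem (mem_subgroupOf.mp hmem) t

theorem IsPGroup.commutatorElement_pow_eq_one_of_commute {p : ℕ} [Fact p.Prime]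
    (hG : IsPGroup p G) (hodd : Odd p) {u g : G} {a : ℤ} (ha : u * ⁅u, g⁆ * u⁻¹ = ⁅u, g⁆ ^ a)
    {k : ℕ} (hk : u ^ p ^ k * g = g * u ^ p ^ k) : ⁅u, g⁆ ^ p ^ k = 1 := by
  set y := ⁅u, g⁆
  rcases eq_or_ne y 1 with hy1 | hy1
  · rw [hy1, one_pow]
  have hS : y ^ (∑ i ∈ range (p ^ k), a ^ i) = 1 := by
    have := conj_pow_eq_zpow_geom_sum_mul (g := g)
      (by simp only [y, commutatorElement_def]; group) ha (p ^ k)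
    rw [hk, mul_inv_cancel_right] at this
    exact mul_eq_right.mp this.symm
  obtain ⟨e, he⟩ := IsPGroup.iff_orderOf.mp hG y
  have hek : e ≤ k := by
    by_contra! hke
    have hdvd : (p : ℤ) ^ (k + 1) ∣ ∑ i ∈ range (p ^ k), a ^ i :=
      (pow_dvd_pow _ hke).trans (by exact_mod_cast he ▸ orderOf_dvd_iff_zpow_eq_one.mpr hS)
    have hpk := ((Int.geom_sum_range_prime_pow_modEq hodd
      (hG.intModEq_one_of_conj_eq_zpow hy1 ha) k).dvd_iff).mp hdvd
    have := (Nat.pow_dvd_pow_iff_le_right (Fact.out : p.Prime).one_lt).mp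
      (Int.natCast_dvd_natCast.mp (by exact_mod_cast hpk))
    omega
  rw [← orderOf_dvd_iff_pow_eq_one, he]
  exact pow_dvd_pow p hek

theorem IsPGroup.commutatorElement_pow_index_centralizer_eq_one [Finite G] {p : ℕ}
    [Fact p.Prime] (hG : IsPGroup p G) (hodd : Odd p) {N : Subgroup G} [N.Normal] [IsCyclic N]
    {u g : G} (hN : ⁅u, g⁆ ∈ N) : ⁅u, g⁆ ^ (centralizer {g}).index = 1 := by
  obtain ⟨k, hk⟩ := hG.index (centralizer {g})
  obtain ⟨a, ha⟩ := exists_conj_eq_zpow_of_isCyclic N u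
  have hcomm := mem_centralizer_singleton_iff.mp (hG.pow_index_mem (centralizer {g}) u)
  rw [hk] at hcomm ⊢
  exact hG.commutatorElement_pow_eq_one_of_commute hodd (ha _ hN) hcomm

theorem index_centralizer_singleton (g : G) :
    (centralizer {g}).index = {x | IsConj g x}.ncard := by
  rw [centralizer_eq_comap_stabilizer]
  refine (index_comap_of_surjective (MulAction.stabilizer (ConjAct G) g)
    (f := (ConjAct.toConjAct : G ≃* ConjAct G).toMonoidHom) (MulEquiv.surjective _)).trans ?_
  rw [MulAction.index_stabilizer]
  congr 1
  ext x
  exact ConjAct.mem_orbit_conjAct.trans isConj_comm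

theorem setOf_isConj_eq_range_commutatorElement_mul (g : G) :
    {x | IsConj g x} = Set.range (fun u : G => ⁅u, g⁆) * {g} := by
  ext x
  simp [Set.mul_singleton, isConj_iff, commutatorElement_def]

theorem card_closure_dvd_of_isCyclic {N : Subgroup G} [IsCyclic N] {K : Set G} (hKN : K ⊆ N)
    {m : ℕ} (hK : ∀ z ∈ K, z ^ m = 1) : Nat.card (closure K) ∣ m := by
  have hle : closure K ≤ N := (closure_le N).mpr hKN
  have : IsCyclic (closure K) := isCyclic_of_injective (inclusion hle) (inclusion_injective hle)
  rw [← IsCyclic.exponent_eq_card]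
  refine Monoid.exponent_dvd_of_forall_pow_eq_one fun ⟨z, hz⟩ => Subtype.ext ?_
  show z ^ m = 1
  induction hz using closure_induction with
  | mem z hz => exact hK z hz
  | one => exact one_pow m
  | mul x y hx hy ihx ihy =>
    have : Commute x y := congrArg Subtype.val (mul_comm' (⟨x, hle hx⟩ : N) ⟨y, hle hy⟩)
    rw [this.mul_pow, ihx, ihy, one_mul]
  | inv x _ ih => rw [inv_pow, ih, inv_one]

theorem exists_subgroup_coe_eq_of_isCyclic [Finite G] {N : Subgroup G} [IsCyclic N] {K : Set G}
    (hKN : K ⊆ N) (hne : K.Nonempty) (hK : ∀ z ∈ K, z ^ K.ncard = 1) :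
    ∃ H ≤ N, (H : Set G) = K := by
  refine ⟨closure K, (closure_le N).mpr hKN,
    (Set.eq_of_subset_of_ncard_le Subgroup.subset_closure ?_).symm⟩
  rw [← Nat.card_coe_set_eq]
  exact Nat.le_of_dvd ((Set.ncard_pos (Set.toFinite K)).mpr hne)
    (card_closure_dvd_of_isCyclic hKN hK)

end

/-- Let `p` be an odd prime and `G` a finite `p`-group whose derived
subgroup is cyclic. Then every conjugacy class of `G` is a coset `H * g` for some
subgroup `H` of the derived subgroup and some `g` in the class. -/
theorem conjClass_is_coset (p : ℕ) (hp : p.Prime) (hodd : Odd p)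
    (G : Type*) [Group G] [Finite G] (hG : ∃ n : ℕ, Nat.card G = p ^ n)
    (hcyc : IsCyclic ↥(commutator G)) (g : G) :
    ∃ H : Subgroup G, H ≤ commutator G ∧
      {x : G | IsConj g x} = (H : Set G) * ({g} : Set G) := by
  have : Fact p.Prime := ⟨hp⟩
  obtain ⟨n, hn⟩ := hG
  have hK : ∀ u, ⁅u, g⁆ ∈ commutator G := fun u =>
    commutator_mem_commutator (mem_top u) (mem_top g)
  have hKcard : (Set.range fun u : G => ⁅u, g⁆).ncard = (centralizer {g}).index := by
    rw [index_centralizer_singleton, setOf_isConj_eq_range_commutatorElement_mul,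
      Set.mul_singleton, Set.ncard_image_of_injective _ (mul_left_injective g)]
  obtain ⟨H, hHG', hHK⟩ := exists_subgroup_coe_eq_of_isCyclic (Set.range_subset_iff.mpr hK)
    (Set.range_nonempty _) (by
      rintro _ ⟨u, rfl⟩
      rw [hKcard]
      exact (IsPGroup.of_card hn).commutatorElement_pow_index_centralizer_eq_one hodd (hK u))
  exact ⟨H, hHG', by rw [setOf_isConj_eq_range_commutatorElement_mul, hHK]⟩
end

section
/- Let G be a finite p-group and N a normal subgroup of G. Then there exists a Jennings set S of G such that N ∩ S is a Jennings set of N. -/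
/-- The Jennings (Brauer–Jennings–Zassenhaus) series of a group:
`D_n(G) = ∏_{i p^j ≥ n} γ_i(G)^{p^j}` (here `γ_{i+1}(G) = lowerCentralSeries G i`). -/
def jennings (p : ℕ) (G : Type*) [Group G] (n : ℕ) : Subgroup G :=
  ⨆ (i : ℕ) (j : ℕ) (_ : n ≤ (i + 1) * p ^ j),
    Subgroup.closure {x : G | ∃ y ∈ (⊤ : Subgroup G).lowerCentralSeries i, x = y ^ p ^ j}

/-- A *Jennings set* of a finite `p`-group: a set `S` of nontrivial elements such that for
each `i ≥ 1` the elements of `S` lying in `D_i(G) \ D_{i+1}(G)` project onto a basis of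
the elementary abelian quotient `D_i(G)/D_{i+1}(G)`, i.e. they generate it and their
number is the `p`-logarithm of its order. -/
def IsJenningsSet (p : ℕ) {G : Type*} [Group G] (S : Set G) : Prop :=
  (1 : G) ∉ S ∧
  ∀ i : ℕ, 1 ≤ i →
    jennings p G i =
      Subgroup.closure (S ∩ ((jennings p G i : Set G) \ (jennings p G (i + 1) : Set G)))
        ⊔ jennings p G (i + 1) ∧
    Nat.card (jennings p G i) =
      p ^ Nat.card (S ∩ ((jennings p G i : Set G) \ (jennings p G (i + 1) : Set G)) : Set G) *
        Nat.card (jennings p G (i + 1))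

/-!
Write `D i` for the Jennings series of `G` and `M k` for the image in `G` of the Jennings series
of `N`. For every pair `(k, i)` choose a set `T k i` lifting a basis of the Zassenhaus layer
`(M k ⊓ D i) / ((M (k+1) ⊓ D i) ⊔ (M k ⊓ D (i+1)))`. By the butterfly lemma this layer is
isomorphic both to the layer `D (i+1) ⊔ (M k ⊓ D i)` over `D (i+1) ⊔ (M (k+1) ⊓ D i)` and to the
layer `M (k+1) ⊔ (M k ⊓ D i)` over `M (k+1) ⊔ (M k ⊓ D (i+1))`. Telescoping, `⋃ k, T k i` lifts a
basis of `D (i+1) ⊔ (N ⊓ D i)` over `D (i+1)` and `⋃ i, T k i` one of `M k` over `M (k+1)`.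
Completing the former by a basis of `D i` over `D (i+1) ⊔ (N ⊓ D i)`, which lies outside `N`,
gives `S` with `N ∩ S = ⋃ k i, T k i`. Bases of a layer `H ≤ K` exist in any finite `p`-group,
by climbing from `H` to `K` through subgroups of index `p`.
-/

open Subgroup

section General

variable {G : Type*} [Group G]

theorem Subgroup.card_eq_relIndex_mul_card {H K : Subgroup G} (h : H ≤ K) :
    Nat.card K = H.relIndex K * Nat.card H := by
  rw [← relIndex_bot_left, ← relIndex_bot_left, mul_comm,
    relIndex_mul_relIndex ⊥ H K bot_le h]

theorem Subgroup.card_sup_mul_card_inf_of_le_normalizer {H K : Subgroup G}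
    (hK : K ≤ normalizer H) :
    Nat.card ↥(H ⊔ K) * Nat.card ↥(H ⊓ K) = Nat.card H * Nat.card K := by
  have := normal_subgroupOf_of_le_normalizer hK
  have := normal_subgroupOf_sup_of_le_normalizer hK
  have hquot : H.relIndex (K ⊔ H) = H.relIndex K :=
    Nat.card_congr (QuotientGroup.quotientInfEquivProdNormalizerQuotient K H hK).toEquiv.symm
  rw [sup_comm, card_eq_relIndex_mul_card le_sup_right, hquot,
    card_eq_relIndex_mul_card (inf_le_right : H ⊓ K ≤ K), inf_relIndex_right]
  ring

theorem Antitone.iUnion_inter_diff_succ {α : Type*} {D : ℕ → Set α} (hD : Antitone D)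
    {L : ℕ → Set α} (hL : ∀ j, L j ⊆ D j \ D (j + 1)) (i : ℕ) :
    (⋃ j, L j) ∩ (D i \ D (i + 1)) = L i := by
  refine Set.Subset.antisymm ?_ fun x hx => ⟨Set.mem_iUnion_of_mem i hx, hL i hx⟩
  rintro x ⟨hx, hxi, hxi'⟩
  obtain ⟨j, hxj⟩ := Set.mem_iUnion.mp hx
  obtain ⟨hxD, hxD'⟩ := hL j hxj
  rcases lt_trichotomy j i with hji | rfl | hij
  · exact absurd (hD (Nat.succ_le_of_lt hji) hxi) hxD'
  · exact hxj
  · exact absurd (hD (Nat.succ_le_of_lt hij) hxD) hxi'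

theorem Subgroup.le_normalizer_map_subtype (H : Subgroup G)
    (K : Subgroup H) [K.Normal] : H ≤ normalizer (K.map H.subtype : Set G) := by
  calc H = (normalizer (K : Set H)).map H.subtype := by
        rw [normalizer_eq_top, ← MonoidHom.range_eq_map, range_subtype]
    _ ≤ normalizer (K.map H.subtype : Set G) := le_normalizer_map _

end General

section LayerBasis

variable {G : Type*} [Group G]

/-- The condition that `IsJenningsSet` imposes on each layer
`jennings p G (i + 1) ≤ jennings p G i`, for an arbitrary pair of subgroups `H ≤ K`. -/
structure IsLayerBasis (p : ℕ) (H K : Subgroup G) (s : Set G) : Prop where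
  subset_diff : s ⊆ (K : Set G) \ H
  closure_sup_eq : closure s ⊔ H = K
  card_eq : Nat.card K = p ^ Nat.card s * Nat.card H

namespace IsLayerBasis

variable {p : ℕ} {H M K W : Subgroup G} {s t : Set G}

theorem le (h : IsLayerBasis p H K s) : H ≤ K :=
  h.closure_sup_eq ▸ le_sup_right

theorem refl (p : ℕ) (H : Subgroup G) : IsLayerBasis p H H ∅ where
  subset_diff := Set.empty_subset _
  closure_sup_eq := by rw [Subgroup.closure_empty, bot_sup_eq]
  card_eq := by simp

theorem trans [Finite G] (h₁ : IsLayerBasis p H M s) (h₂ : IsLayerBasis p M K t) :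
    IsLayerBasis p H K (s ∪ t) where
  subset_diff := Set.union_subset
    (fun x hx => ⟨h₂.le (h₁.subset_diff hx).1, (h₁.subset_diff hx).2⟩)
    (fun x hx => ⟨(h₂.subset_diff hx).1, fun hxH => (h₂.subset_diff hx).2 (h₁.le hxH)⟩)
  closure_sup_eq := by
    rw [Subgroup.closure_union, sup_comm (closure s), sup_assoc, h₁.closure_sup_eq,
      h₂.closure_sup_eq]
  card_eq := by
    have hdisj : Disjoint s t := Set.disjoint_left.mpr fun x hxs hxt =>
      (h₂.subset_diff hxt).2 (h₁.closure_sup_eq ▸ mem_sup_left (subset_closure hxs))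
    rw [h₂.card_eq, h₁.card_eq, Nat.card_coe_set_eq, Nat.card_coe_set_eq, Nat.card_coe_set_eq,
      Set.ncard_union_eq hdisj, pow_add]
    ring

theorem singleton [Finite G] (hp : p.Prime) {x : G} (hHK : H ≤ K) (hxK : x ∈ K) (hxH : x ∉ H)
    (hcard : Nat.card K = p * Nat.card H) : IsLayerBasis p H K {x} where
  subset_diff := Set.singleton_subset_iff.mpr ⟨hxK, hxH⟩
  closure_sup_eq := by
    set M := closure {x} ⊔ H
    have hMK : M ≤ K := sup_le ((closure_le K).mpr (Set.singleton_subset_iff.mpr hxK)) hHK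
    have hindex : H.relIndex M * M.relIndex K = p := by
      rw [relIndex_mul_relIndex H M K le_sup_right hMK]
      refine Nat.eq_of_mul_eq_mul_right (Nat.card_pos (α := H)) ?_
      rw [← card_eq_relIndex_mul_card hHK, hcard]
    have hHM : H.relIndex M ≠ 1 := fun h =>
      hxH (relIndex_eq_one.mp h (mem_sup_left (subset_closure rfl)))
    rw [← hindex, Nat.prime_mul_iff] at hp
    exact le_antisymm hMK (relIndex_eq_one.mp (hp.resolve_right fun h => hHM h.2).2)
  card_eq := by rw [Nat.card_coe_set_eq, Set.ncard_singleton, pow_one, hcard]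

theorem sup_left [Finite G] (h : IsLayerBasis p H K s) (hK : K ≤ normalizer W)
    (hWK : W ⊓ K ≤ H) : IsLayerBasis p (W ⊔ H) (W ⊔ K) s where
  subset_diff x hx := by
    obtain ⟨hxK, hxH⟩ := h.subset_diff hx
    refine ⟨mem_sup_right hxK, fun hxWH => hxH ?_⟩
    rw [SetLike.mem_coe, ← SetLike.mem_coe,
      coe_mul_of_right_le_normalizer_left W H (h.le.trans hK)] at hxWH
    obtain ⟨w, hw, y, hy, rfl⟩ := hxWH
    have hwK : w ∈ K := by simpa using mul_mem hxK (inv_mem (h.le hy))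
    exact mul_mem (hWK ⟨hw, hwK⟩) hy
  closure_sup_eq := by rw [sup_left_comm, h.closure_sup_eq]
  card_eq := by
    have hinf : W ⊓ H = W ⊓ K := le_antisymm (inf_le_inf_left W h.le) (le_inf inf_le_left hWK)
    have hK' := card_sup_mul_card_inf_of_le_normalizer hK
    have hH' := card_sup_mul_card_inf_of_le_normalizer (h.le.trans hK)
    rw [hinf] at hH'
    refine Nat.eq_of_mul_eq_mul_right (Nat.card_pos (α := ↥(W ⊓ K))) ?_
    rw [hK', mul_assoc, hH', h.card_eq]
    ring

theorem comap_of_injective {G' : Type*} [Group G'] {f : G →* G'} (hf : Function.Injective f)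
    {s : Set G'} (h : IsLayerBasis p (H.map f) (K.map f) s) : IsLayerBasis p H K (f ⁻¹' s) := by
  have hs : f '' (f ⁻¹' s) = s := Set.image_preimage_eq_of_subset fun y hy => by
    obtain ⟨x, -, rfl⟩ := mem_map.mp (h.subset_diff hy).1
    exact ⟨x, rfl⟩
  refine ⟨fun x hx => ?_, ?_, ?_⟩
  · obtain ⟨hxK, hxH⟩ := h.subset_diff hx
    exact ⟨(mem_map_iff_mem hf).mp hxK, fun hxH' => hxH ((mem_map_iff_mem hf).mpr hxH')⟩
  · apply map_injective hf
    rw [Subgroup.map_sup, MonoidHom.map_closure, hs, h.closure_sup_eq]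
  · rw [← card_map_of_injective hf (K := K), h.card_eq, card_map_of_injective hf,
      ← Nat.card_image_of_injective hf (f ⁻¹' s), hs]

theorem iUnion_of_eventually_eq [Finite G] {X : ℕ → Subgroup G} {s : ℕ → Set G}
    (h : ∀ k, IsLayerBasis p (X (k + 1)) (X k) (s k)) {n : ℕ} (hn : ∀ k, n ≤ k → X k = X n) :
    IsLayerBasis p (X n) (X 0) (⋃ k, s k) := by
  have hpartial : ∀ m, IsLayerBasis p (X m) (X 0) (⋃ k < m, s k) := by
    intro m
    induction m with
    | zero => simpa using refl p (X 0)
    | succ m ih =>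
      rw [Set.biUnion_lt_succ, Set.union_comm]
      exact (h m).trans ih
  have hempty : ∀ k, n ≤ k → s k = ∅ := fun k hk => by
    simpa [hn k hk, hn (k + 1) (by omega)] using (h k).subset_diff
  convert hpartial n using 1
  ext x
  simp only [Set.mem_iUnion, exists_prop]
  refine ⟨fun ⟨k, hx⟩ => ⟨k, ?_, hx⟩, fun ⟨k, _, hx⟩ => ⟨k, hx⟩⟩
  by_contra hk
  simp [hempty k (not_lt.mp hk)] at hx

end IsLayerBasis

theorem IsPGroup.exists_card_eq_mul_of_lt [Finite G] {p : ℕ} (hp : p.Prime) (hG : IsPGroup p G)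
    {H K : Subgroup G} (hHK : H < K) :
    ∃ H' : Subgroup G, H ≤ H' ∧ H' ≤ K ∧ Nat.card H' = p * Nat.card H := by
  have := Fact.mk hp
  obtain ⟨n, hn⟩ := (hG.to_subgroup H).exists_card_eq
  obtain ⟨m, hm⟩ := (hG.to_subgroup K).exists_card_eq
  have hcardH : Nat.card (H.subgroupOf K) = p ^ n := by
    rw [Nat.card_congr (subgroupOfEquivOfLe hHK.le).toEquiv, hn]
  have hnm : n < m := by
    have hne : Nat.card H ≠ Nat.card K := fun h => hHK.ne (eq_of_le_of_card_ge hHK.le h.ge)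
    have hle := card_le_of_le hHK.le
    rw [hn, hm] at hne hle
    exact lt_of_le_of_ne ((Nat.pow_le_pow_iff_right hp.one_lt).mp hle) (ne_of_apply_ne _ hne)
  obtain ⟨K₀, hK₀, hHK₀⟩ := Sylow.exists_subgroup_card_pow_succ (G := K)
    (hm ▸ pow_dvd_pow p hnm) hcardH
  refine ⟨K₀.map K.subtype, fun x hx => ⟨⟨x, hHK.le hx⟩, hHK₀ hx, rfl⟩, map_subtype_le _, ?_⟩
  rw [card_map_of_injective K.subtype_injective, hK₀, hn, pow_succ']

theorem IsLayerBasis.exists [Finite G] {p : ℕ} (hp : p.Prime)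
    (hG : IsPGroup p G) {H K : Subgroup G} (hHK : H ≤ K) : ∃ s, IsLayerBasis p H K s := by
  induction H using WellFoundedGT.induction with
  | _ H ih =>
    rcases hHK.eq_or_lt with rfl | hlt
    · exact ⟨∅, IsLayerBasis.refl p H⟩
    obtain ⟨H', hHH', hH'K, hcard⟩ := hG.exists_card_eq_mul_of_lt hp hlt
    have hlt' : H < H' := lt_of_le_of_ne hHH' fun h =>
      (lt_mul_left Nat.card_pos hp.one_lt).ne (h ▸ hcard)
    obtain ⟨x, hxH', hxH⟩ := SetLike.exists_of_lt hlt'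
    obtain ⟨s, hs⟩ := ih H' hlt' hH'K
    exact ⟨{x} ∪ s, (IsLayerBasis.singleton hp hHH' hxH' hxH hcard).trans hs⟩

end LayerBasis

section Butterfly

variable {G : Type*} [Group G] {p : ℕ} {A A' B B' : Subgroup G} {s : Set G}

theorem IsLayerBasis.zassenhaus_left [Finite G] (hA : A ≤ normalizer A') (hB : B ≤ normalizer B')
    (hB' : B' ≤ B) (h : IsLayerBasis p ((A' ⊓ B) ⊔ (A ⊓ B')) (A ⊓ B) s) :
    IsLayerBasis p (A' ⊔ (A ⊓ B')) (A' ⊔ (A ⊓ B)) s := by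
  have hnorm : A ⊓ B ≤ normalizer (A' ⊔ (A ⊓ B') : Subgroup G) :=
    (le_inf (inf_le_left.trans hA) ((le_inf (inf_le_left.trans A.le_normalizer)
      (inf_le_right.trans hB)).trans inf_normalizer_le_normalizer_inf)).trans
      (normalizer_inf_normalizer_le_normalizer_sup A' (A ⊓ B'))
  have hinf : (A' ⊔ (A ⊓ B')) ⊓ (A ⊓ B) ≤ (A' ⊓ B) ⊔ (A ⊓ B') := by
    intro x hx
    obtain ⟨hxW, hxAB⟩ := mem_inf.mp hx
    rw [← SetLike.mem_coe, coe_mul_of_right_le_normalizer_left A' (A ⊓ B') (inf_le_left.trans hA)]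
      at hxW
    obtain ⟨a, ha, y, hy, rfl⟩ := hxW
    have haB : a ∈ B := by simpa using mul_mem (mem_inf.mp hxAB).2 (inv_mem (hB' hy.2))
    exact mul_mem_sup ⟨ha, haB⟩ hy
  have hC : (A' ⊓ B) ⊔ (A ⊓ B') ≤ A' ⊔ (A ⊓ B') := sup_le_sup_right inf_le_left _
  simpa only [sup_eq_left.mpr hC, sup_assoc, sup_eq_right.mpr (inf_le_inf_left A hB')]
    using h.sup_left hnorm hinf

theorem IsLayerBasis.zassenhaus_right [Finite G] (hA : A ≤ normalizer A') (hB : B ≤ normalizer B')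
    (hA' : A' ≤ A) (h : IsLayerBasis p ((A' ⊓ B) ⊔ (A ⊓ B')) (A ⊓ B) s) :
    IsLayerBasis p (B' ⊔ (A' ⊓ B)) (B' ⊔ (A ⊓ B)) s := by
  rw [inf_comm A', inf_comm A]
  refine zassenhaus_left hB hA hA' ?_
  rwa [inf_comm B', inf_comm B A', inf_comm B A, sup_comm]

theorem exists_isLayerBasis_of_two_series [Finite G] (hp : p.Prime) (hG : IsPGroup p G)
    {A B : ℕ → Subgroup G} (hA : Antitone A) (hB : Antitone B)
    (hAn : ∀ k, A k ≤ normalizer (A (k + 1))) (hBn : ∀ i, B i ≤ normalizer (B (i + 1)))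
    {n : ℕ} (hAbot : A n = ⊥) (hBbot : B n = ⊥) :
    ∃ T : ℕ → ℕ → Set G,
      (∀ i, IsLayerBasis p (B (i + 1)) (B (i + 1) ⊔ (A 0 ⊓ B i)) (⋃ k, T k i)) ∧
      (∀ k, IsLayerBasis p (A (k + 1)) (A (k + 1) ⊔ (A k ⊓ B 0)) (⋃ i, T k i)) := by
  choose T hT using fun k i => IsLayerBasis.exists hp hG
    (sup_le (inf_le_inf_right (B i) (hA k.le_succ)) (inf_le_inf_left (A k) (hB i.le_succ)))
  refine ⟨T, fun i => ?_, fun k => ?_⟩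
  · have h := IsLayerBasis.iUnion_of_eventually_eq (X := fun k => B (i + 1) ⊔ (A k ⊓ B i))
      (fun k => (hT k i).zassenhaus_right (hAn k) (hBn i) (hA k.le_succ)) (n := n)
      (fun k hk => by simp only [le_bot_iff.mp (hAbot ▸ hA hk), hAbot])
    simpa only [hAbot, bot_inf_eq, sup_bot_eq] using h
  · have h := IsLayerBasis.iUnion_of_eventually_eq (X := fun i => A (k + 1) ⊔ (A k ⊓ B i))
      (fun i => (hT k i).zassenhaus_left (hAn k) (hBn i) (hB i.le_succ)) (n := n)
      (fun i hi => by simp only [le_bot_iff.mp (hBbot ▸ hB hi), hBbot])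
    simpa only [hBbot, inf_bot_eq, sup_bot_eq] using h

end Butterfly

section Jennings

variable {p : ℕ} {G : Type*} [Group G]

theorem closure_pow_le_jennings {n i j : ℕ} (h : n ≤ (i + 1) * p ^ j) :
    closure {x : G | ∃ y ∈ (⊤ : Subgroup G).lowerCentralSeries i, x = y ^ p ^ j} ≤
      jennings p G n :=
  le_iSup₂_of_le i j (le_iSup_of_le h le_rfl)

theorem jennings_antitone (p : ℕ) (G : Type*) [Group G] : Antitone (jennings p G) :=
  fun _ _ hmn => iSup₂_le fun _ _ => iSup_le fun h => closure_pow_le_jennings (hmn.trans h)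

theorem jennings_zero (p : ℕ) (G : Type*) [Group G] : jennings p G 0 = ⊤ :=
  eq_top_iff.mpr fun x _ => closure_pow_le_jennings (i := 0) (j := 0) (Nat.zero_le _)
    (subset_closure ⟨x, mem_top x, (pow_one x).symm⟩)

theorem map_jennings_le {G' : Type*} [Group G'] (f : G →* G') (n : ℕ) :
    (jennings p G n).map f ≤ jennings p G' n := by
  simp only [jennings, Subgroup.map_iSup, MonoidHom.map_closure]
  refine iSup₂_le fun i j => iSup_le fun hcond => (closure_pow_le_jennings hcond).trans' ?_
  refine closure_mono ?_
  rintro _ ⟨_, ⟨y, hy, rfl⟩, rfl⟩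
  have hfy : f y ∈ ((⊤ : Subgroup G).lowerCentralSeries i).map f := mem_map_of_mem f hy
  rw [map_lowerCentralSeries] at hfy
  exact ⟨f y, lowerCentralSeries_mono i le_top hfy, map_pow f y _⟩

instance jennings_characteristic (n : ℕ) : (jennings p G n).Characteristic :=
  characteristic_iff_map_le.mpr fun φ => map_jennings_le φ.toMonoidHom n

theorem IsPGroup.exists_jennings_eq_bot [Finite G] (hp : p.Prime) (hG : IsPGroup p G) :
    ∃ n, jennings p G n = ⊥ := by
  have := Fact.mk hp
  obtain ⟨c, hc⟩ := Subgroup.nilpotent_iff_lowerCentralSeries.mp hG.isNilpotent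
  obtain ⟨s, hs⟩ := hG.exists_card_eq
  refine ⟨c * p ^ s, eq_bot_iff.mpr <| iSup₂_le fun i j => iSup_le fun hcond => ?_⟩
  rw [closure_le]
  rintro _ ⟨y, hy, rfl⟩
  rcases le_or_gt c i with hci | hic
  · have hyc := Subgroup.lowerCentralSeries_antitone ⊤ hci hy
    rw [hc, mem_bot] at hyc
    rw [hyc, one_pow]
    exact one_mem _
  · have hsj : s ≤ j := by
      by_contra! hjs
      have : (i + 1) * p ^ j < c * p ^ s :=
        Nat.mul_lt_mul_of_le_of_lt hic (Nat.pow_lt_pow_right hp.one_lt hjs) (by omega)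
      omega
    rw [orderOf_dvd_iff_pow_eq_one.mp ((orderOf_dvd_natCard y).trans (hs ▸ pow_dvd_pow p hsj))]
    exact one_mem _

end Jennings

theorem isJenningsSet_iUnion {p : ℕ} {G : Type*} [Group G] {L : ℕ → Set G}
    (h : ∀ i, IsLayerBasis p (jennings p G (i + 1)) (jennings p G i) (L i)) :
    IsJenningsSet p (⋃ i, L i) := by
  refine ⟨fun h1 => ?_, fun i _ => ?_⟩
  · obtain ⟨i, hi⟩ := Set.mem_iUnion.mp h1
    exact ((h i).subset_diff hi).2 (one_mem _)
  · have hD : Antitone fun i => (jennings p G i : Set G) := fun _ _ hmn =>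
      SetLike.coe_subset_coe.mpr (jennings_antitone p G hmn)
    rw [hD.iUnion_inter_diff_succ (fun j => (h j).subset_diff) i]
    exact ⟨(h i).closure_sup_eq.symm, (h i).card_eq⟩

theorem exists_isLayerBasis_jennings_of_subgroup {p : ℕ} {G : Type*} [Group G] [Finite G]
    (hp : p.Prime) (hG : IsPGroup p G) (N : Subgroup G) :
    ∃ T : ℕ → ℕ → Set G,
      (∀ i, IsLayerBasis p (jennings p G (i + 1)) (jennings p G (i + 1) ⊔ (N ⊓ jennings p G i))
        (⋃ k, T k i)) ∧
      ∀ k, IsLayerBasis p (jennings p N (k + 1)) (jennings p N k) (N.subtype ⁻¹' ⋃ i, T k i) := by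
  set A : ℕ → Subgroup G := fun k => (jennings p N k).map N.subtype
  have hA : Antitone A := fun _ _ h => map_mono (jennings_antitone p N h)
  have hA0 : A 0 = N := by simp [A, jennings_zero, ← MonoidHom.range_eq_map]
  obtain ⟨n₁, hn₁⟩ := hG.exists_jennings_eq_bot hp
  obtain ⟨n₂, hn₂⟩ := (hG.to_subgroup N).exists_jennings_eq_bot hp
  obtain ⟨T, hTG, hTN⟩ := exists_isLayerBasis_of_two_series hp hG hA
    (jennings_antitone p G) (fun k => (map_subtype_le _).trans (N.le_normalizer_map_subtype _))
    (fun i => le_normalizer_of_normal) (n := max n₁ n₂)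
    (by simp only [A, eq_bot_mono (jennings_antitone p N (le_max_right _ _)) hn₂, Subgroup.map_bot])
    (eq_bot_mono (jennings_antitone p G (le_max_left n₁ n₂)) hn₁)
  refine ⟨T, fun i => hA0 ▸ hTG i, fun k => IsLayerBasis.comap_of_injective N.subtype_injective ?_⟩
  simpa only [jennings_zero, inf_top_eq, sup_eq_right.mpr (hA k.le_succ)] using hTN k

theorem exists_jenningsSet_compatible_general (p : ℕ) (hp : p.Prime)
    (G : Type*) [Group G] [Finite G] (hG : ∃ s : ℕ, Nat.card G = p ^ s)
    (N : Subgroup G) :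
    ∃ S : Set G, IsJenningsSet p S ∧ IsJenningsSet p {x : ↥N | (x : G) ∈ S} := by
  have := Fact.mk hp
  have hpG : IsPGroup p G := IsPGroup.iff_card.mpr hG
  obtain ⟨T, hTG, hTN⟩ := exists_isLayerBasis_jennings_of_subgroup hp hpG N
  choose F hF using fun i => IsLayerBasis.exists hp hpG
    (sup_le (jennings_antitone p G i.le_succ) inf_le_right :
      jennings p G (i + 1) ⊔ (N ⊓ jennings p G i) ≤ jennings p G i)
  have hFN : ∀ i, ∀ x ∈ F i, x ∉ N := fun i x hx hxN =>
    ((hF i).subset_diff hx).2 (mem_sup_right ⟨hxN, ((hF i).subset_diff hx).1⟩)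
  refine ⟨⋃ i, (⋃ k, T k i) ∪ F i, isJenningsSet_iUnion fun i => (hTG i).trans (hF i), ?_⟩
  convert isJenningsSet_iUnion hTN using 1
  ext x
  simp only [Set.mem_ofPred_eq, Set.mem_iUnion, Set.mem_union, Set.mem_preimage, coe_subtype]
  exact ⟨fun ⟨i, hx⟩ => hx.elim (fun ⟨k, hk⟩ => ⟨k, i, hk⟩) (absurd x.2 <| hFN i x ·),
    fun ⟨k, i, hx⟩ => ⟨i, Or.inl ⟨k, hx⟩⟩⟩

/-- For a finite `p`-group `G` and a normal subgroup `N`, there is a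
Jennings set `S` of `G` such that `N ∩ S` is a Jennings set of `N`. -/
theorem exists_jenningsSet_compatible (p : ℕ) (hp : p.Prime)
    (G : Type*) [Group G] [Finite G] (hG : ∃ s : ℕ, Nat.card G = p ^ s)
    (N : Subgroup G) [N.Normal] :
    ∃ S : Set G, IsJenningsSet p S ∧ IsJenningsSet p {x : ↥N | (x : G) ∈ S} :=
  exists_jenningsSet_compatible_general p hp G hG N
end

section
/- Let k be a field of characteristic p, G a finite p-group, and N a normal subgroup of G. Define ideals J_n = J_n(N,G) of kG recursively by J_1 = I(N)·I(G) and J_{n+1} = I(N)·J_n + J_n·I(N). Then the map Λ_N^n from I(N)kG / (I(N)I(G)) to I(N)^{p^n}·kG / J_{p^n} sending the class of x to the class of x^{p^n} is well defined, i.e., if x − y ∈ I(N)·I(G) with x, y ∈ I(N)·kG, then x^{p^n} − y^{p^n} ∈ J_{p^n}. -/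
/-- The ideals `J_n(N,G)`: `J_1 = I(N)·I(G)`, `J_{n+1} = I(N)·J_n + J_n·I(N)`.
Here `Jrel IN IG n` is `J_{n+1}`. -/
def Jrel {k R : Type*} [CommSemiring k] [Semiring R] [Algebra k R]
    (IN IG : Submodule k R) : ℕ → Submodule k R
  | 0 => IN * IG
  | n + 1 => IN * Jrel IN IG n + Jrel IN IG n * IN

/-!
Writing `x ^ (m + 1) - y ^ (m + 1) = x * (x ^ m - y ^ m) + (x - y) * y ^ m`, induction on `m`
reduces the claim to the fact that multiplying an element of `J_j` on either side by an element
of `I(N)·kG` lands in `J_{j+1}`. This holds because `I(G)` is a two-sided ideal and, `N` being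
normal, `kG·I(N) = I(N)·kG`, so that every `J_j` is a two-sided ideal.
-/

open MonoidAlgebra Submodule

namespace MonoidAlgebra

variable {k : Type*} [CommRing k] {G : Type*}

theorem span_range_of [Monoid G] : span k (Set.range (of k G)) = ⊤ := by
  rw [eq_top_iff]
  rintro a -
  induction a using MonoidAlgebra.induction_on with
  | of g => exact subset_span ⟨g, rfl⟩
  | add a b ha hb => exact add_mem ha hb
  | smul r a ha => exact smul_mem _ r ha

theorem top_mul_span_le [Monoid G] {S : Set (MonoidAlgebra k G)}
    {T : Submodule k (MonoidAlgebra k G)} (h : ∀ g, ∀ s ∈ S, of k G g * s ∈ T) :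
    ⊤ * span k S ≤ T := by
  rw [← span_range_of, span_mul_span, span_le]
  rintro _ ⟨_, ⟨g, rfl⟩, s, hs, rfl⟩
  exact h g s hs

theorem span_mul_top_le [Monoid G] {S : Set (MonoidAlgebra k G)}
    {T : Submodule k (MonoidAlgebra k G)} (h : ∀ g, ∀ s ∈ S, s * of k G g ∈ T) :
    span k S * ⊤ ≤ T := by
  rw [← span_range_of, span_mul_span, span_le]
  rintro _ ⟨s, hs, _, ⟨g, rfl⟩, rfl⟩
  exact h g s hs

theorem top_mul_span_of_sub_one_le [Monoid G] :
    ⊤ * span k {z : MonoidAlgebra k G | ∃ h : G, z = of k G h - 1} ≤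
      span k {z : MonoidAlgebra k G | ∃ h : G, z = of k G h - 1} := by
  refine top_mul_span_le ?_
  rintro g _ ⟨h, rfl⟩
  have : of k G g * (of k G h - 1) = (of k G (g * h) - 1) - (of k G g - 1) := by
    rw [map_mul]; noncomm_ring
  exact this ▸ sub_mem (subset_span ⟨g * h, rfl⟩) (subset_span ⟨g, rfl⟩)

theorem span_of_sub_one_mul_top_le [Monoid G] :
    span k {z : MonoidAlgebra k G | ∃ h : G, z = of k G h - 1} * ⊤ ≤
      span k {z : MonoidAlgebra k G | ∃ h : G, z = of k G h - 1} := by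
  refine span_mul_top_le ?_
  rintro g _ ⟨h, rfl⟩
  have : (of k G h - 1) * of k G g = (of k G (h * g) - 1) - (of k G g - 1) := by
    rw [map_mul]; noncomm_ring
  exact this ▸ sub_mem (subset_span ⟨h * g, rfl⟩) (subset_span ⟨g, rfl⟩)

theorem top_mul_span_of_sub_one_eq_of_normal [Group G] (N : Subgroup G) [N.Normal] :
    ⊤ * span k {z : MonoidAlgebra k G | ∃ h ∈ N, z = of k G h - 1} =
      span k {z : MonoidAlgebra k G | ∃ h ∈ N, z = of k G h - 1} * ⊤ := by
  apply le_antisymm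
  · refine top_mul_span_le ?_
    rintro g _ ⟨h, hh, rfl⟩
    have : of k G g * (of k G h - 1) = (of k G (g * h * g⁻¹) - 1) * of k G g := by
      rw [mul_sub, sub_mul, ← map_mul, ← map_mul, inv_mul_cancel_right, mul_one, one_mul]
    exact this ▸ mul_mem_mul (subset_span ⟨_, ‹N.Normal›.conj_mem h hh g, rfl⟩) trivial
  · refine span_mul_top_le ?_
    rintro g _ ⟨h, hh, rfl⟩
    have : (of k G h - 1) * of k G g = of k G g * (of k G (g⁻¹ * h * g) - 1) := by
      rw [mul_sub, sub_mul, ← map_mul, ← map_mul, mul_assoc, mul_inv_cancel_left, mul_one,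
        one_mul]
    refine this ▸ mul_mem_mul trivial (subset_span ⟨_, ?_, rfl⟩)
    simpa using ‹N.Normal›.conj_mem h hh g⁻¹

end MonoidAlgebra

section Jrel

variable {k R : Type*} [CommSemiring k] [Semiring R] [Algebra k R] {IN IG : Submodule k R}

theorem top_mul_Jrel_le (hN : ⊤ * IN = IN * ⊤) (hG : ⊤ * IG ≤ IG) (m : ℕ) :
    ⊤ * Jrel IN IG m ≤ Jrel IN IG m := by
  induction m with
  | zero =>
    calc ⊤ * (IN * IG) = IN * (⊤ * IG) := by rw [← mul_assoc, hN, mul_assoc]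
      _ ≤ IN * IG := by gcongr
  | succ m ih =>
    rw [Jrel, mul_add]
    refine add_le_add ?_ ?_
    · calc ⊤ * (IN * Jrel IN IG m) = IN * (⊤ * Jrel IN IG m) := by
            rw [← mul_assoc, hN, mul_assoc]
        _ ≤ IN * Jrel IN IG m := by gcongr
    · calc ⊤ * (Jrel IN IG m * IN) = ⊤ * Jrel IN IG m * IN := (mul_assoc _ _ _).symm
        _ ≤ Jrel IN IG m * IN := by gcongr

theorem Jrel_mul_top_le (hN : ⊤ * IN = IN * ⊤) (hG : IG * ⊤ ≤ IG) (m : ℕ) :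
    Jrel IN IG m * ⊤ ≤ Jrel IN IG m := by
  induction m with
  | zero =>
    calc IN * IG * ⊤ = IN * (IG * ⊤) := mul_assoc _ _ _
      _ ≤ IN * IG := by gcongr
  | succ m ih =>
    rw [Jrel, add_mul]
    refine add_le_add ?_ ?_
    · calc IN * Jrel IN IG m * ⊤ = IN * (Jrel IN IG m * ⊤) := mul_assoc _ _ _
        _ ≤ IN * Jrel IN IG m := by gcongr
    · calc Jrel IN IG m * IN * ⊤ = Jrel IN IG m * ⊤ * IN := by
            rw [mul_assoc, ← hN, mul_assoc]
        _ ≤ Jrel IN IG m * IN := by gcongr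

theorem mul_Jrel_le_Jrel_succ (hN : ⊤ * IN = IN * ⊤) (hG : ⊤ * IG ≤ IG) (m : ℕ) :
    IN * ⊤ * Jrel IN IG m ≤ Jrel IN IG (m + 1) :=
  calc IN * ⊤ * Jrel IN IG m = IN * (⊤ * Jrel IN IG m) := mul_assoc _ _ _
    _ ≤ IN * Jrel IN IG m := by gcongr; exact top_mul_Jrel_le hN hG m
    _ ≤ Jrel IN IG (m + 1) := le_sup_left

theorem Jrel_mul_le_Jrel_succ (hN : ⊤ * IN = IN * ⊤) (hG : IG * ⊤ ≤ IG) (m : ℕ) :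
    Jrel IN IG m * (IN * ⊤) ≤ Jrel IN IG (m + 1) :=
  calc Jrel IN IG m * (IN * ⊤) = Jrel IN IG m * ⊤ * IN := by rw [← hN, mul_assoc]
    _ ≤ Jrel IN IG m * IN := by gcongr; exact Jrel_mul_top_le hN hG m
    _ ≤ Jrel IN IG (m + 1) := le_sup_right

end Jrel

section PowSubPow

variable {k R : Type*} [CommSemiring k] [Ring R] [Algebra k R] {IN IG : Submodule k R} {x y : R}

theorem sub_mul_pow_mem_Jrel (hN : ⊤ * IN = IN * ⊤) (hG : IG * ⊤ ≤ IG) (hy : y ∈ IN * ⊤)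
    (hxy : x - y ∈ IN * IG) (m : ℕ) : (x - y) * y ^ m ∈ Jrel IN IG m := by
  induction m with
  | zero => simpa [Jrel] using hxy
  | succ m ih =>
    rw [pow_succ, ← mul_assoc]
    exact Jrel_mul_le_Jrel_succ hN hG m (mul_mem_mul ih hy)

theorem pow_succ_sub_pow_succ_mem_Jrel (hN : ⊤ * IN = IN * ⊤) (hGl : ⊤ * IG ≤ IG)
    (hGr : IG * ⊤ ≤ IG) (hx : x ∈ IN * ⊤) (hy : y ∈ IN * ⊤) (hxy : x - y ∈ IN * IG)
    (m : ℕ) : x ^ (m + 1) - y ^ (m + 1) ∈ Jrel IN IG m := by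
  induction m with
  | zero => simpa [Jrel] using hxy
  | succ m ih =>
    have : x ^ (m + 2) - y ^ (m + 2) =
        x * (x ^ (m + 1) - y ^ (m + 1)) + (x - y) * y ^ (m + 1) := by
      rw [pow_succ' x, pow_succ' y, mul_sub, sub_mul]; abel
    rw [this]
    exact add_mem (mul_Jrel_le_Jrel_succ hN hGl m (mul_mem_mul hx ih))
      (sub_mul_pow_mem_Jrel hN hGr hy hxy (m + 1))

theorem pow_sub_pow_mem_Jrel_pred (hN : ⊤ * IN = IN * ⊤) (hGl : ⊤ * IG ≤ IG)
    (hGr : IG * ⊤ ≤ IG) (hx : x ∈ IN * ⊤) (hy : y ∈ IN * ⊤) (hxy : x - y ∈ IN * IG) :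
    ∀ m, x ^ m - y ^ m ∈ Jrel IN IG (m - 1)
  | 0 => by simp
  | m + 1 => pow_succ_sub_pow_succ_mem_Jrel hN hGl hGr hx hy hxy m

end PowSubPow

theorem pow_sub_pow_mem_Jrel_general (p : ℕ) (k : Type*) [Field k]
    (G : Type*) [Group G]
    (N : Subgroup G) [N.Normal] (n : ℕ) (x y : MonoidAlgebra k G)
    (hx : x ∈ Submodule.span k
        {z : MonoidAlgebra k G | ∃ h ∈ N, z = MonoidAlgebra.of k G h - 1} * ⊤)
    (hy : y ∈ Submodule.span k
        {z : MonoidAlgebra k G | ∃ h ∈ N, z = MonoidAlgebra.of k G h - 1} * ⊤)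
    (hxy : x - y ∈ Submodule.span k
        {z : MonoidAlgebra k G | ∃ h ∈ N, z = MonoidAlgebra.of k G h - 1} *
        Submodule.span k {z : MonoidAlgebra k G | ∃ h : G, z = MonoidAlgebra.of k G h - 1}) :
    x ^ p ^ n - y ^ p ^ n ∈
      Jrel (Submodule.span k {z : MonoidAlgebra k G | ∃ h ∈ N, z = MonoidAlgebra.of k G h - 1})
        (Submodule.span k {z : MonoidAlgebra k G | ∃ h : G, z = MonoidAlgebra.of k G h - 1})
        (p ^ n - 1) := by
  have hN := top_mul_span_of_sub_one_eq_of_normal (k := k) N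
  have hGl := top_mul_span_of_sub_one_le (k := k) (G := G)
  have hGr := span_of_sub_one_mul_top_le (k := k) (G := G)
  exact pow_sub_pow_mem_Jrel_pred hN hGl hGr hx hy hxy (p ^ n)

/-- The map `Λ_N^n : I(N)kG/(I(N)I(G)) → I(N)^(p^n)kG/J_{p^n}`,
`x ↦ x^(p^n)`, is well defined: if `x, y ∈ I(N)·kG` and `x - y ∈ I(N)·I(G)`, then
`x^(p^n) - y^(p^n) ∈ J_{p^n}(N,G)`. -/
theorem pow_sub_pow_mem_Jrel (p : ℕ) (hp : p.Prime) (k : Type*) [Field k] [CharP k p]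
    (G : Type*) [Group G] [Finite G] (hG : ∃ s : ℕ, Nat.card G = p ^ s)
    (N : Subgroup G) [N.Normal] (n : ℕ) (x y : MonoidAlgebra k G)
    (hx : x ∈ Submodule.span k
        {z : MonoidAlgebra k G | ∃ h ∈ N, z = MonoidAlgebra.of k G h - 1} * ⊤)
    (hy : y ∈ Submodule.span k
        {z : MonoidAlgebra k G | ∃ h ∈ N, z = MonoidAlgebra.of k G h - 1} * ⊤)
    (hxy : x - y ∈ Submodule.span k
        {z : MonoidAlgebra k G | ∃ h ∈ N, z = MonoidAlgebra.of k G h - 1} *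
        Submodule.span k {z : MonoidAlgebra k G | ∃ h : G, z = MonoidAlgebra.of k G h - 1}) :
    x ^ p ^ n - y ^ p ^ n ∈
      Jrel (Submodule.span k {z : MonoidAlgebra k G | ∃ h ∈ N, z = MonoidAlgebra.of k G h - 1})
        (Submodule.span k {z : MonoidAlgebra k G | ∃ h : G, z = MonoidAlgebra.of k G h - 1})
        (p ^ n - 1) :=
  pow_sub_pow_mem_Jrel_general p k G N n x y hx hy hxy
end

section
/- Let k be a commutative ring, G a group, and L, N normal subgroups of G. Then I(L)·(I(N)kG) + I(N)·(I(L)kG) = I([L,N])·kG + I(N)·(I(L)kG) as ideals of kG. -/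
/-!
Every module in the statement is a right ideal of `kG`, so both inclusions can be checked on
generators, and both rest on the identity `(⁅l, n⁆ - 1) · nl = (l - 1)(n - 1) - (n - 1)(l - 1)`.
It writes each generator `(l - 1)(n - 1)` of `I(L)I(N)` as an element of
`I([L,N])kG + I(N)I(L)kG`, and conversely puts `⁅l, n⁆ - 1` into the right ideal
`I(L)I(N)kG + I(N)I(L)kG`. Since `gh - 1 = (g - 1)h + (h - 1)`, a right ideal containing `s - 1`
for all `s ∈ S` contains `g - 1` for every `g` in the subgroup generated by `S`, which gives
the generators of `I([L,N])`.
-/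

open MonoidAlgebra
open scoped commutatorElement

namespace Submodule

variable {R A : Type*} [CommSemiring R] [Semiring A] [Algebra R A]

theorem mul_top_mul_top_le (M : Submodule R A) : M * ⊤ * ⊤ ≤ M * ⊤ := by
  rw [mul_assoc]; exact mul_le_mul_right le_top M

theorem mul_mul_top_mul_top_le (M N : Submodule R A) : M * (N * ⊤) * ⊤ ≤ M * (N * ⊤) := by
  rw [mul_assoc]; exact mul_le_mul_right N.mul_top_mul_top_le M

end Submodule

namespace MonoidAlgebra

section Identities

variable {k : Type*} [Ring k] {G : Type*} [Group G]

theorem of_mul_sub_one (g h : G) :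
    of k G (g * h) - 1 = (of k G g - 1) * of k G h + (of k G h - 1) := by
  rw [map_mul]; noncomm_ring

theorem of_inv_sub_one (g : G) :
    of k G g⁻¹ - 1 = -((of k G g - 1) * of k G g⁻¹) := by
  rw [sub_mul, ← map_mul, mul_inv_cancel, map_one, one_mul, neg_sub]

theorem of_commutatorElement_sub_one_mul (g h : G) :
    (of k G ⁅g, h⁆ - 1) * of k G (h * g) =
      (of k G g - 1) * (of k G h - 1) - (of k G h - 1) * (of k G g - 1) := by
  have hgh : ⁅g, h⁆ * (h * g) = g * h := by rw [commutatorElement_def]; group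
  rw [sub_mul, ← map_mul, hgh, map_mul, map_mul]
  noncomm_ring

end Identities

variable (k : Type*) [CommRing k] {G : Type*} [Group G]

/-- The augmentation ideal `I(H)` of `kH`, as a `k`-submodule of `kG`; `I(H)·kG` is
`augSpan k H * ⊤`. -/
noncomputable def augSpan (H : Subgroup G) : Submodule k (MonoidAlgebra k G) :=
  Submodule.span k {z | ∃ g ∈ H, z = of k G g - 1}

variable {k}

theorem of_sub_one_mem_augSpan {H : Subgroup G} {g : G} (hg : g ∈ H) :
    of k G g - 1 ∈ augSpan k H :=
  Submodule.subset_span ⟨g, hg, rfl⟩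

theorem augSpan_closure_le {S : Set G} {X : Submodule k (MonoidAlgebra k G)}
    (hX : X * ⊤ ≤ X) (hS : ∀ s ∈ S, of k G s - 1 ∈ X) :
    augSpan k (Subgroup.closure S) ≤ X := by
  have mul_of_mem {x : MonoidAlgebra k G} (hx : x ∈ X) (g : G) : x * of k G g ∈ X :=
    hX (Submodule.mul_mem_mul hx Submodule.mem_top)
  refine Submodule.span_le.mpr ?_
  rintro _ ⟨g, hg, rfl⟩
  induction hg using Subgroup.closure_induction with
  | mem s hs => exact hS s hs
  | one => rw [map_one, sub_self]; exact zero_mem X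
  | mul g h _ _ hg hh => rw [of_mul_sub_one]; exact add_mem (mul_of_mem hg h) hh
  | inv g _ hg => rw [of_inv_sub_one]; exact neg_mem (mul_of_mem hg g⁻¹)

theorem augSpan_mul_augSpan_le {H K : Subgroup G} {X : Submodule k (MonoidAlgebra k G)}
    (hX : ∀ h ∈ H, ∀ g ∈ K, (of k G h - 1) * (of k G g - 1) ∈ X) :
    augSpan k H * augSpan k K ≤ X := by
  rw [augSpan, augSpan, Submodule.span_mul_span, Submodule.span_le]
  rintro _ ⟨_, ⟨h, hh, rfl⟩, _, ⟨g, hg, rfl⟩, rfl⟩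
  exact hX h hh g hg

theorem sub_one_mul_sub_one_mem {H K : Subgroup G} {h g : G} (hh : h ∈ H) (hg : g ∈ K) :
    (of k G h - 1) * (of k G g - 1) ∈ augSpan k H * (augSpan k K * ⊤) := by
  rw [← mul_one (of k G g - 1)]
  exact Submodule.mul_mem_mul (of_sub_one_mem_augSpan hh)
    (Submodule.mul_mem_mul (of_sub_one_mem_augSpan hg) Submodule.mem_top)

theorem augSpan_mul_augSpan_mul_top_le (L N : Subgroup G) :
    augSpan k L * (augSpan k N * ⊤) ≤
      augSpan k ⁅L, N⁆ * ⊤ ⊔ augSpan k N * (augSpan k L * ⊤) := by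
  have hX : (augSpan k ⁅L, N⁆ * ⊤ ⊔ augSpan k N * (augSpan k L * ⊤)) * ⊤ ≤
      augSpan k ⁅L, N⁆ * ⊤ ⊔ augSpan k N * (augSpan k L * ⊤) := by
    rw [Submodule.sup_mul]
    exact sup_le_sup (Submodule.mul_top_mul_top_le _) (Submodule.mul_mul_top_mul_top_le _ _)
  rw [← mul_assoc]
  refine (mul_le_mul_left (augSpan_mul_augSpan_le fun l hl n hn => ?_) ⊤).trans hX
  rw [← sub_add_cancel ((of k G l - 1) * (of k G n - 1)) ((of k G n - 1) * (of k G l - 1)),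
    ← of_commutatorElement_sub_one_mul]
  exact add_mem (Submodule.mem_sup_left (Submodule.mul_mem_mul
      (of_sub_one_mem_augSpan (Subgroup.commutator_mem_commutator hl hn)) Submodule.mem_top))
    (Submodule.mem_sup_right (sub_one_mul_sub_one_mem hn hl))

theorem augSpan_commutator_mul_top_le (L N : Subgroup G) :
    augSpan k ⁅L, N⁆ * ⊤ ≤
      augSpan k L * (augSpan k N * ⊤) ⊔ augSpan k N * (augSpan k L * ⊤) := by
  set X := augSpan k L * (augSpan k N * ⊤) ⊔ augSpan k N * (augSpan k L * ⊤)
  have hX : X * ⊤ ≤ X := by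
    rw [Submodule.sup_mul]
    exact sup_le_sup (Submodule.mul_mul_top_mul_top_le _ _)
      (Submodule.mul_mul_top_mul_top_le _ _)
  refine (mul_le_mul_left (augSpan_closure_le hX ?_) ⊤).trans hX
  rintro _ ⟨l, hl, n, hn, rfl⟩
  have hdiff : (of k G l - 1) * (of k G n - 1) - (of k G n - 1) * (of k G l - 1) ∈ X :=
    sub_mem (Submodule.mem_sup_left (sub_one_mul_sub_one_mem hl hn))
      (Submodule.mem_sup_right (sub_one_mul_sub_one_mem hn hl))
  have hmem := hX (Submodule.mul_mem_mul hdiff (Submodule.mem_top (x := of k G (n * l)⁻¹)))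
  rwa [← of_commutatorElement_sub_one_mul, mul_assoc, ← map_mul, mul_inv_cancel, map_one,
    mul_one] at hmem

end MonoidAlgebra

theorem aug_mul_relAug_add_general (k : Type*) [CommRing k] (G : Type*) [Group G]
    (L N : Subgroup G) :
    Submodule.span k {z : MonoidAlgebra k G | ∃ g ∈ L, z = MonoidAlgebra.of k G g - 1} *
        (Submodule.span k {z : MonoidAlgebra k G | ∃ g ∈ N, z = MonoidAlgebra.of k G g - 1} * ⊤) +
      Submodule.span k {z : MonoidAlgebra k G | ∃ g ∈ N, z = MonoidAlgebra.of k G g - 1} *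
        (Submodule.span k {z : MonoidAlgebra k G | ∃ g ∈ L, z = MonoidAlgebra.of k G g - 1} * ⊤)
    = Submodule.span k {z : MonoidAlgebra k G | ∃ g ∈ ⁅L, N⁆, z = MonoidAlgebra.of k G g - 1} * ⊤ +
      Submodule.span k {z : MonoidAlgebra k G | ∃ g ∈ N, z = MonoidAlgebra.of k G g - 1} *
        (Submodule.span k {z : MonoidAlgebra k G | ∃ g ∈ L, z = MonoidAlgebra.of k G g - 1} * ⊤) := by
  change augSpan k L * (augSpan k N * ⊤) + augSpan k N * (augSpan k L * ⊤) =
    augSpan k ⁅L, N⁆ * ⊤ + augSpan k N * (augSpan k L * ⊤)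
  rw [Submodule.add_eq_sup, Submodule.add_eq_sup]
  exact le_antisymm (sup_le (augSpan_mul_augSpan_mul_top_le L N) le_sup_right)
    (sup_le (augSpan_commutator_mul_top_le L N) le_sup_right)

/-- For a commutative ring `k`, a group `G` and normal subgroups `L, N`
of `G`, one has `I(L)·(I(N)kG) + I(N)·(I(L)kG) = I([L,N])·kG + I(N)·(I(L)kG)` inside the
group ring `kG`. -/
theorem aug_mul_relAug_add (k : Type*) [CommRing k] (G : Type*) [Group G]
    (L N : Subgroup G) [L.Normal] [N.Normal] :
    Submodule.span k {z : MonoidAlgebra k G | ∃ g ∈ L, z = MonoidAlgebra.of k G g - 1} *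
        (Submodule.span k {z : MonoidAlgebra k G | ∃ g ∈ N, z = MonoidAlgebra.of k G g - 1} * ⊤) +
      Submodule.span k {z : MonoidAlgebra k G | ∃ g ∈ N, z = MonoidAlgebra.of k G g - 1} *
        (Submodule.span k {z : MonoidAlgebra k G | ∃ g ∈ L, z = MonoidAlgebra.of k G g - 1} * ⊤)
    = Submodule.span k {z : MonoidAlgebra k G | ∃ g ∈ ⁅L, N⁆, z = MonoidAlgebra.of k G g - 1} * ⊤ +
      Submodule.span k {z : MonoidAlgebra k G | ∃ g ∈ N, z = MonoidAlgebra.of k G g - 1} *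
        (Submodule.span k {z : MonoidAlgebra k G | ∃ g ∈ L, z = MonoidAlgebra.of k G g - 1} * ⊤) :=
  aug_mul_relAug_add_general k G L N
end

section
/- Let p be an odd prime, m ≥ 1, and let G be a finite p-group with normal cyclic subgroup ⟨a⟩ of order p^m such that γ_i(G) = ⟨a^{p^{(i−2)c}}⟩ for all i ≥ 2, where c = m − o for some 0 ≤ o < m. Then for every n ≥ 0, the Jennings subgroup D_{p^n}(G) equals G^{p^n} = ⟨g^{p^n} : g ∈ G⟩. -/
theorem Nat.add_two_le_pow {p k : ℕ} (hp : 3 ≤ p) (hk : 1 ≤ k) : k + 2 ≤ p ^ k :=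
  calc k + 2 ≤ 3 * k := by omega
    _ ≤ p * k := Nat.mul_le_mul_right k hp
    _ ≤ p ^ k := Nat.mul_le_pow (by omega) k

theorem Nat.sub_add_one_le_of_pow_le_mul_pow {p n j i : ℕ} (hp : 3 ≤ p) (hjn : j < n)
    (h : p ^ n ≤ (i + 1) * p ^ j) : n - j + 1 ≤ i := by
  have hpow : p ^ (n - j) ≤ i + 1 := by
    rw [← Nat.sub_add_cancel hjn.le, pow_add] at h
    exact Nat.le_of_mul_le_mul_right h (by positivity)
  have := Nat.add_two_le_pow hp (Nat.sub_pos_of_lt hjn)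
  omega

section Group

variable {G : Type*} [Group G]

theorem pow_mem_closure_pow_of_dvd (g : G) {k l : ℕ} (hkl : k ∣ l) :
    g ^ l ∈ Subgroup.closure {x : G | ∃ g : G, x = g ^ k} := by
  obtain ⟨c, rfl⟩ := hkl
  exact Subgroup.subset_closure ⟨g ^ c, by rw [← pow_mul, mul_comm]⟩

theorem pow_mem_closure_pow_of_mem_zpowers {b y : G} {k l d : ℕ}
    (hy : y ∈ Subgroup.zpowers (b ^ k)) (hd : d ∣ k * l) :
    y ^ l ∈ Subgroup.closure {x : G | ∃ g : G, x = g ^ d} := by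
  obtain ⟨z, rfl⟩ := hy
  have hcomm : ((b ^ k) ^ z) ^ l = (b ^ z) ^ (k * l) := by
    simp only [← zpow_natCast, ← zpow_mul, Nat.cast_mul]
    ring_nf
  rw [hcomm]
  exact pow_mem_closure_pow_of_dvd _ hd

theorem jennings_le_iff {p n : ℕ} {H : Subgroup G} :
    jennings p G n ≤ H ↔ ∀ i j, n ≤ (i + 1) * p ^ j →
      ∀ y ∈ (⊤ : Subgroup G).lowerCentralSeries i, y ^ p ^ j ∈ H := by
  simp only [jennings, iSup_le_iff, Subgroup.closure_le, Set.subset_def, Set.mem_ofPred_eq,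
    forall_exists_index, and_imp, SetLike.mem_coe]
  exact forall₃_congr fun i j _ => ⟨fun h y hy => h _ y hy rfl, fun h _ y hy hx => hx ▸ h y hy⟩

theorem closure_pow_le_jennings_s18 (p n : ℕ) :
    Subgroup.closure {x : G | ∃ g : G, x = g ^ p ^ n} ≤ jennings p G (p ^ n) :=
  le_iSup_of_le 0 <| le_iSup_of_le n <| le_iSup_of_le (by simp) <|
    Subgroup.closure_mono fun _ ⟨g, hg⟩ => ⟨g, by simp, hg⟩

end Group

theorem jennings_pow_eq_pow_subgroup_general (p : ℕ) (hp : p.Prime) (hodd : Odd p)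
    (G : Type*) [Group G]
    (a : G) (m o : ℕ) (ho : o < m)
    (hγ : ∀ i : ℕ, 2 ≤ i →
      (⊤ : Subgroup G).lowerCentralSeries (i - 1) = Subgroup.zpowers (a ^ p ^ ((i - 2) * (m - o)))) :
    ∀ n : ℕ, jennings p G (p ^ n) = Subgroup.closure {x : G | ∃ g : G, x = g ^ p ^ n} := by
  have hp3 : 3 ≤ p := by
    have : p ≠ 2 := by rintro rfl; exact Nat.not_odd_iff_even.mpr even_two hodd
    have := hp.two_le
    omega
  intro n
  refine le_antisymm (jennings_le_iff.mpr fun i j hij y hy => ?_) (closure_pow_le_jennings_s18 p n)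
  rcases le_or_gt n j with hjn | hjn
  · exact pow_mem_closure_pow_of_dvd y (pow_dvd_pow p hjn)
  · have hi := Nat.sub_add_one_le_of_pow_le_mul_pow hp3 hjn hij
    rw [← Nat.add_sub_cancel i 1, hγ (i + 1) (by omega)] at hy
    refine pow_mem_closure_pow_of_mem_zpowers hy ?_
    rw [← pow_add]
    apply pow_dvd_pow
    have : n - j ≤ (i + 1 - 2) * (m - o) := (show n - j ≤ i + 1 - 2 by omega).trans
      (Nat.le_mul_of_pos_right _ (by omega))
    omega

/-- Let `p` be an odd prime, `m ≥ 1`, and `G` a finite `p`-group with a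
normal cyclic subgroup `⟨a⟩` of order `p^m` such that `γ_i(G) = ⟨a^(p^((i−2)(m−o)))⟩` for
all `i ≥ 2`, where `0 ≤ o < m`. Then `D_{p^n}(G) = G^{p^n}` for every `n ≥ 0`. -/
theorem jennings_pow_eq_pow_subgroup (p : ℕ) (hp : p.Prime) (hodd : Odd p)
    (G : Type*) [Group G] [Finite G] (hG : ∃ s : ℕ, Nat.card G = p ^ s)
    (a : G) (m o : ℕ) (hm : 1 ≤ m) (ho : o < m)
    [(Subgroup.zpowers a).Normal] (ha : orderOf a = p ^ m)
    (hγ : ∀ i : ℕ, 2 ≤ i →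
      (⊤ : Subgroup G).lowerCentralSeries (i - 1) = Subgroup.zpowers (a ^ p ^ ((i - 2) * (m - o)))) :
    ∀ n : ℕ, jennings p G (p ^ n) = Subgroup.closure {x : G | ∃ g : G, x = g ^ p ^ n} :=
  jennings_pow_eq_pow_subgroup_general p hp hodd G a m o ho hγ
end
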